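/- Let h₁ and h₂ be two symmetric kernels of respective sizes p₁×q₁ and p₂×q₂ with E[h₁(Y_{𝐢,𝐣})²] < ∞ and E[h₂(Y_{𝐢,𝐣})²] < ∞. Let (r,c) satisfy (0,0) ≤ (r,c) ≤ (p₁,q₁) and (0,0) ≤ (r,c) ≤ (p₂,q₂), and let (𝐢₁,𝐣₁) and (𝐢₂,𝐣₂) be two pairs of finite index sets with |𝐢₁| = |𝐢₂| = r and |𝐣₁| = |𝐣₂| = c. If (𝐢₁,𝐣₁) ≠ (𝐢₂,𝐣₂), then Cov(p^{r,c}h₁(Y_{𝐢₁,𝐣₁}), p^{r,c}h₂(Y_{𝐢₂,𝐣₂})) = 0. -/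

import Mathlib

open MeasureTheory ProbabilityTheory Filter
open scoped BigOperators NNReal Topology

noncomputable section

namespace RCEU

variable {Ω : Type*}

/-- The `a`-th element of the finite set `I ⊂ ℕ`, in increasing order
(junk value `0` when out of range). -/
def nth (I : Finset ℕ) (a : ℕ) : ℕ := (I.sort (· ≤ ·)).getD a 0

/-- A kernel applied to the submatrix of `Y` with rows `I` and columns `J`,
taken in increasing order: `h(Y_{I,J})`. -/
def ker {p q : ℕ} (h : (Fin p → Fin q → ℝ) → ℝ) (Y : ℕ → ℕ → Ω → ℝ)
    (I J : Finset ℕ) (ω : Ω) : ℝ :=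
  h fun a b => Y (nth I a) (nth J b) ω

/-- A symmetric kernel of size `p × q`: a measurable function of `p × q` real matrices,
invariant under all permutations of the rows and of the columns of its argument. -/
def SymKernel (p q : ℕ) (h : (Fin p → Fin q → ℝ) → ℝ) : Prop :=
  Measurable h ∧
    ∀ (M : Fin p → Fin q → ℝ) (σ : Equiv.Perm (Fin p)) (τ : Equiv.Perm (Fin q)),
      h (fun a b => M (σ a) (τ b)) = h M

/-- The σ-algebra `A_{I,J}` generated by the latent variables `(ξ_i)_{i ∈ I}`,
`(η_j)_{j ∈ J}` and `(ζ_{ij})_{i ∈ I, j ∈ J}`. -/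
def latentAlg [MeasurableSpace Ω] (ξ η : ℕ → Ω → ℝ) (ζ : ℕ → ℕ → Ω → ℝ)
    (I J : Finset ℕ) : MeasurableSpace Ω :=
  (⨆ i ∈ I, MeasurableSpace.comap (ξ i) inferInstance) ⊔
    (⨆ j ∈ J, MeasurableSpace.comap (η j) inferInstance) ⊔
    (⨆ i ∈ I, ⨆ j ∈ J, MeasurableSpace.comap (ζ i j) inferInstance)

/-- The Aldous–Hoover–Kallenberg representation of a dissociated RCE matrix `Y`:
`(ξ_i)`, `(η_j)`, `(ζ_{ij})` are mutually independent families of i.i.d. random variables,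
each uniform on `[0,1]`, and `Y i j = φ (ξ i) (η j) (ζ i j)` for a measurable `φ`. -/
structure Model [MeasurableSpace Ω] (μ : Measure Ω) (ξ η : ℕ → Ω → ℝ)
    (ζ : ℕ → ℕ → Ω → ℝ) (φ : ℝ → ℝ → ℝ → ℝ) (Y : ℕ → ℕ → Ω → ℝ) : Prop where
  meas_ξ : ∀ i, Measurable (ξ i)
  meas_η : ∀ j, Measurable (η j)
  meas_ζ : ∀ i j, Measurable (ζ i j)
  indep : iIndepFun
    (Sum.elim ξ (Sum.elim η fun ij : ℕ × ℕ => ζ ij.1 ij.2)) μ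
  unif_ξ : ∀ i, μ.map (ξ i) = volume.restrict (Set.Icc (0 : ℝ) 1)
  unif_η : ∀ j, μ.map (η j) = volume.restrict (Set.Icc (0 : ℝ) 1)
  unif_ζ : ∀ i j, μ.map (ζ i j) = volume.restrict (Set.Icc (0 : ℝ) 1)
  meas_φ : Measurable fun t : ℝ × ℝ × ℝ => φ t.1 t.2.1 t.2.2
  Y_eq : ∀ i j ω, Y i j ω = φ (ξ i ω) (η j ω) (ζ i j ω)

/-- Covariance of two real random variables. -/
def covar [MeasurableSpace Ω] (μ : Measure Ω) (f g : Ω → ℝ) : ℝ :=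
  ∫ ω, (f ω - ∫ x, f x ∂μ) * (g ω - ∫ x, g x ∂μ) ∂μ

/-- `ψ` is the family of conditional expectations `ψ^{r,c}h(Y_{I',J'})`:
for any `I ⊇ I'` of size `p` and `J ⊇ J'` of size `q`,
`ψ I' J' = E[h(Y_{I,J}) | A_{I',J'}]` a.s. (independently of the choice of `I`, `J`). -/
def IsCondExpFamily [MeasurableSpace Ω] (μ : Measure Ω) (ξ η : ℕ → Ω → ℝ)
    (ζ : ℕ → ℕ → Ω → ℝ) {p q : ℕ} (h : (Fin p → Fin q → ℝ) → ℝ)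
    (Y : ℕ → ℕ → Ω → ℝ) (ψ : Finset ℕ → Finset ℕ → Ω → ℝ) : Prop :=
  ∀ (I' J' I J : Finset ℕ), I.card = p → J.card = q → I' ⊆ I → J' ⊆ J →
    ψ I' J' =ᵐ[μ] μ[ker h Y I J | latentAlg ξ η ζ I' J']

/-- `ψ₁ i` is the conditional expectation `ψ^{1,0}h(Y_{{i},∅}) = E[h(Y_{I,J}) | ξ_i]`,
for any `I ∋ i` of size `p` and any `J` of size `q`. -/
def IsRowCondExp [MeasurableSpace Ω] (μ : Measure Ω) (ξ η : ℕ → Ω → ℝ)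
    (ζ : ℕ → ℕ → Ω → ℝ) {p q : ℕ} (h : (Fin p → Fin q → ℝ) → ℝ)
    (Y : ℕ → ℕ → Ω → ℝ) (ψ₁ : ℕ → Ω → ℝ) : Prop :=
  ∀ (i : ℕ) (I J : Finset ℕ), I.card = p → J.card = q → i ∈ I →
    ψ₁ i =ᵐ[μ] μ[ker h Y I J | latentAlg ξ η ζ {i} ∅]

/-- `ψ₂ j` is the conditional expectation `ψ^{0,1}h(Y_{∅,{j}}) = E[h(Y_{I,J}) | η_j]`,
for any `I` of size `p` and any `J ∋ j` of size `q`. -/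
def IsColCondExp [MeasurableSpace Ω] (μ : Measure Ω) (ξ η : ℕ → Ω → ℝ)
    (ζ : ℕ → ℕ → Ω → ℝ) {p q : ℕ} (h : (Fin p → Fin q → ℝ) → ℝ)
    (Y : ℕ → ℕ → Ω → ℝ) (ψ₂ : ℕ → Ω → ℝ) : Prop :=
  ∀ (j : ℕ) (I J : Finset ℕ), I.card = p → J.card = q → j ∈ J →
    ψ₂ j =ᵐ[μ] μ[ker h Y I J | latentAlg ξ η ζ ∅ {j}]

/-- The Hoeffding-type projection `p^{r,c}h(Y_{I,J})` built from the family `ψ` of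
conditional expectations, defined by the recursion
`p^{r,c}h(Y_{I,J}) = ψ^{r,c}h(Y_{I,J}) − Σ_{(I',J') ⊆ (I,J), (I',J') ≠ (I,J)} p^{r',c'}h(Y_{I',J'})`. -/
def proj (ψ : Finset ℕ → Finset ℕ → Ω → ℝ) : Finset ℕ → Finset ℕ → Ω → ℝ
  | I, J =>
    ψ I J - ∑ P ∈ ((I.powerset ×ˢ J.powerset).erase (I, J)).attach,
      proj ψ P.1.1 P.1.2
termination_by I J => I.card + J.card
decreasing_by
  obtain ⟨hne, hmem⟩ := Finset.mem_erase.mp P.2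
  rw [Finset.mem_product, Finset.mem_powerset, Finset.mem_powerset] at hmem
  rcases eq_or_ne P.1.1 I with h1 | h1
  · have h2 : P.1.2 ≠ J := fun h2 => hne (Prod.ext h1 h2)
    have hlt := Finset.card_lt_card (HasSubset.Subset.ssubset_of_ne hmem.2 h2)
    have hle := Finset.card_le_card hmem.1
    omega
  · have hlt := Finset.card_lt_card (HasSubset.Subset.ssubset_of_ne hmem.1 h1)
    have hle := Finset.card_le_card hmem.2
    omega

/-- The `U`-statistic `U^h_{m,n}(Y)` of kernel `h`. -/
def UStat {p q : ℕ} (h : (Fin p → Fin q → ℝ) → ℝ) (Y : ℕ → ℕ → Ω → ℝ)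
    (m n : ℕ) (ω : Ω) : ℝ :=
  (m.choose p : ℝ)⁻¹ * (n.choose q : ℝ)⁻¹ *
    ∑ I ∈ (Finset.range m).powersetCard p, ∑ J ∈ (Finset.range n).powersetCard q,
      ker h Y I J ω

/-- `P^{r,c}_{m,n}h(Y)`, the `U`-statistic of kernel `p^{r,c}h`. -/
def PStat (ψ : Finset ℕ → Finset ℕ → Ω → ℝ) (r c m n : ℕ) (ω : Ω) : ℝ :=
  (m.choose r : ℝ)⁻¹ * (n.choose c : ℝ)⁻¹ *
    ∑ I ∈ (Finset.range m).powersetCard r, ∑ J ∈ (Finset.range n).powersetCard c,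
      proj ψ I J ω

/-- The estimator `μ̂^{h,(i)}_N` of `ψ^{1,0}h(Y_{{i},∅})`: average of the kernel over all
`p × q` submatrices of the upper-left `m × n` corner whose row set contains `i`. -/
def muHat {p q : ℕ} (h : (Fin p → Fin q → ℝ) → ℝ) (Y : ℕ → ℕ → Ω → ℝ)
    (m n i : ℕ) (ω : Ω) : ℝ :=
  ((m - 1).choose (p - 1) : ℝ)⁻¹ * (n.choose q : ℝ)⁻¹ *
    ∑ I ∈ ((Finset.range m).powersetCard p).filter (fun I => i ∈ I),
      ∑ J ∈ (Finset.range n).powersetCard q, ker h Y I J ω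

/-- The estimator `ν̂^{h,(j)}_N` of `ψ^{0,1}h(Y_{∅,{j}})`. -/
def nuHat {p q : ℕ} (h : (Fin p → Fin q → ℝ) → ℝ) (Y : ℕ → ℕ → Ω → ℝ)
    (m n j : ℕ) (ω : Ω) : ℝ :=
  (m.choose p : ℝ)⁻¹ * ((n - 1).choose (q - 1) : ℝ)⁻¹ *
    ∑ I ∈ (Finset.range m).powersetCard p,
      ∑ J ∈ ((Finset.range n).powersetCard q).filter (fun J => j ∈ J), ker h Y I J ω

/-- The covariance estimator `ĉ^{h₁,h₂;1,0}_N`. -/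
def cHat10 {p q : ℕ} (h₁ h₂ : (Fin p → Fin q → ℝ) → ℝ) (Y : ℕ → ℕ → Ω → ℝ)
    (m n : ℕ) (ω : Ω) : ℝ :=
  (m.choose 2 : ℝ)⁻¹ *
    ∑ i₂ ∈ Finset.range m, ∑ i₁ ∈ Finset.range i₂,
      (muHat h₁ Y m n i₁ ω - muHat h₁ Y m n i₂ ω) *
        (muHat h₂ Y m n i₁ ω - muHat h₂ Y m n i₂ ω) / 2

/-- The covariance estimator `ĉ^{h₁,h₂;0,1}_N`. -/
def cHat01 {p q : ℕ} (h₁ h₂ : (Fin p → Fin q → ℝ) → ℝ) (Y : ℕ → ℕ → Ω → ℝ)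
    (m n : ℕ) (ω : Ω) : ℝ :=
  (n.choose 2 : ℝ)⁻¹ *
    ∑ j₂ ∈ Finset.range n, ∑ j₁ ∈ Finset.range j₂,
      (nuHat h₁ Y m n j₁ ω - nuHat h₁ Y m n j₂ ω) *
        (nuHat h₂ Y m n j₁ ω - nuHat h₂ Y m n j₂ ω) / 2

/-- The variance estimator `v̂^{h;1,0}_N`. -/
def vHat10 {p q : ℕ} (h : (Fin p → Fin q → ℝ) → ℝ) (Y : ℕ → ℕ → Ω → ℝ)
    (m n : ℕ) (ω : Ω) : ℝ :=
  (m.choose 2 : ℝ)⁻¹ *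
    ∑ i₂ ∈ Finset.range m, ∑ i₁ ∈ Finset.range i₂,
      (muHat h Y m n i₁ ω - muHat h Y m n i₂ ω) ^ 2 / 2

/-- The variance estimator `v̂^{h;0,1}_N`. -/
def vHat01 {p q : ℕ} (h : (Fin p → Fin q → ℝ) → ℝ) (Y : ℕ → ℕ → Ω → ℝ)
    (m n : ℕ) (ω : Ω) : ℝ :=
  (n.choose 2 : ℝ)⁻¹ *
    ∑ j₂ ∈ Finset.range n, ∑ j₁ ∈ Finset.range j₂,
      (nuHat h Y m n j₁ ω - nuHat h Y m n j₂ ω) ^ 2 / 2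

/-- The row-deleted `U`-statistic `U^{h,(−i,∅)}_N`. -/
def UStatRowDel {p q : ℕ} (h : (Fin p → Fin q → ℝ) → ℝ) (Y : ℕ → ℕ → Ω → ℝ)
    (m n i : ℕ) (ω : Ω) : ℝ :=
  ((m - 1).choose p : ℝ)⁻¹ * (n.choose q : ℝ)⁻¹ *
    ∑ I ∈ ((Finset.range m).erase i).powersetCard p,
      ∑ J ∈ (Finset.range n).powersetCard q, ker h Y I J ω

/-- The column-deleted `U`-statistic `U^{h,(∅,−j)}_N`. -/
def UStatColDel {p q : ℕ} (h : (Fin p → Fin q → ℝ) → ℝ) (Y : ℕ → ℕ → Ω → ℝ)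
    (m n j : ℕ) (ω : Ω) : ℝ :=
  (m.choose p : ℝ)⁻¹ * ((n - 1).choose q : ℝ)⁻¹ *
    ∑ I ∈ (Finset.range m).powersetCard p,
      ∑ J ∈ ((Finset.range n).erase j).powersetCard q, ker h Y I J ω

/-- The extension `h̃` of a kernel `h` of size `p × q` to the size `p' × q'`:
`h̃(M) = [C(p',p) C(q',q)]⁻¹ Σ_{A,B} h(M_{A,B})`, the sum running over all row subsets `A`
of size `p` and column subsets `B` of size `q`, taken in increasing order. -/
def extKer {p q : ℕ} (p' q' : ℕ) (h : (Fin p → Fin q → ℝ) → ℝ)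
    (M : Fin p' → Fin q' → ℝ) : ℝ :=
  (p'.choose p : ℝ)⁻¹ * (q'.choose q : ℝ)⁻¹ *
    ∑ A ∈ ((Finset.univ : Finset (Fin p')).powersetCard p).attach,
      ∑ B ∈ ((Finset.univ : Finset (Fin q')).powersetCard q).attach,
        h fun a b =>
          M (A.1.orderEmbOfFin (Finset.mem_powersetCard.mp A.2).2 a)
            (B.1.orderEmbOfFin (Finset.mem_powersetCard.mp B.2).2 b)

/-- Convergence in distribution of a sequence of random elements towards a law `G`:
convergence of the expectations of every bounded continuous function. -/
def TendstoInDist {E : Type*} [MeasurableSpace Ω] [TopologicalSpace E] [MeasurableSpace E]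
    (μ : Measure Ω) (X : ℕ → Ω → E) (G : Measure E) : Prop :=
  ∀ f : BoundedContinuousFunction E ℝ,
    Tendsto (fun N => ∫ ω, f (X N ω) ∂μ) atTop (𝓝 (∫ x, f x ∂G))

section Aux

open MeasurableSpace

/-- If `mH` is independent of `m₁`, `mc ≤ m₁`, and `f` is `m₁`-measurable, then conditioning
on `mc ⊔ mH` is the same as conditioning on `mc`. -/
theorem condexp_sup_indep' {m₁ mc mH : MeasurableSpace Ω} [m₀ : MeasurableSpace Ω]
    {μ : Measure Ω} [IsProbabilityMeasure μ]
    (hm₁ : m₁ ≤ m₀) (hmH : mH ≤ m₀) (hc₁ : mc ≤ m₁)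
    {f : Ω → ℝ} (hf : StronglyMeasurable[m₁] f) (hfi : Integrable f μ)
    (hindep : Indep mH m₁ μ) :
    μ[f | mc ⊔ mH] =ᵐ[μ] μ[f | mc] := by
  have hmc : mc ≤ m₀ := hc₁.trans hm₁
  have hm₂ : mc ⊔ mH ≤ m₀ := sup_le hmc hmH
  set π : Set (Set Ω) :=
    {s | ∃ a, MeasurableSet[mc] a ∧ ∃ b, MeasurableSet[mH] b ∧ s = a ∩ b} with hπ
  have hgen : (mc ⊔ mH) = MeasurableSpace.generateFrom π := by
    refine le_antisymm (sup_le ?_ ?_) (MeasurableSpace.generateFrom_le ?_)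
    · rw [MeasurableSpace.le_def]
      intro s hs
      exact MeasurableSpace.measurableSet_generateFrom
        ⟨s, hs, Set.univ, MeasurableSet.univ, (Set.inter_univ s).symm⟩
    · rw [MeasurableSpace.le_def]
      intro s hs
      exact MeasurableSpace.measurableSet_generateFrom
        ⟨Set.univ, MeasurableSet.univ, s, hs, (Set.univ_inter s).symm⟩
    · rintro t ⟨a, ha, b, hb, rfl⟩
      exact MeasurableSet.inter (le_sup_left (a := mc) (b := mH) a ha)
        (le_sup_right (a := mc) (b := mH) b hb)
  have hpi : IsPiSystem π := by
    rintro s ⟨a, ha, b, hb, rfl⟩ t ⟨a', ha', b', hb', rfl⟩ -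
    refine ⟨a ∩ a', ha.inter ha', b ∩ b', hb.inter hb', ?_⟩
    ext x; simp only [Set.mem_inter_iff]; tauto
  have key : ∀ s : Set Ω, MeasurableSet[mc ⊔ mH] s →
      ∫ x in s, (μ[f|mc]) x ∂μ = ∫ x in s, f x ∂μ := by
    refine @MeasurableSpace.induction_on_inter Ω (mc ⊔ mH)
      (fun s _ => ∫ x in s, (μ[f|mc]) x ∂μ = ∫ x in s, f x ∂μ) π hgen hpi ?_ ?_ ?_ ?_
    · simp
    · rintro t ⟨a, ha, b, hb, rfl⟩
      have haa : MeasurableSet[m₀] a := hmc a ha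
      have hbb : MeasurableSet[m₀] b := hmH b hb
      have hGint : Integrable (b.indicator (fun _ => (1 : ℝ))) μ :=
        (integrable_const (1 : ℝ)).indicator hbb
      have hindf : IndepFun (a.indicator f) (b.indicator fun _ => (1 : ℝ)) μ := by
        rw [IndepFun_iff_Indep]
        refine indep_of_indep_of_le_left (indep_of_indep_of_le_right hindep.symm ?_) ?_
        · exact Measurable.comap_le
            (((measurable_const : Measurable[mH] fun _ : Ω => (1 : ℝ))).indicator hb)
        · exact Measurable.comap_le
            ((hf.measurable.indicator (hc₁ a ha) : Measurable[m₁] _))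
      have hindg : IndepFun ((a.indicator (μ[f|mc]))) (b.indicator fun _ => (1 : ℝ)) μ := by
        rw [IndepFun_iff_Indep]
        refine indep_of_indep_of_le_left (indep_of_indep_of_le_right hindep.symm ?_) ?_
        · exact Measurable.comap_le
            (((measurable_const : Measurable[mH] fun _ : Ω => (1 : ℝ))).indicator hb)
        · exact le_trans (Measurable.comap_le
            (((stronglyMeasurable_condExp (m := mc)).measurable.indicator ha :
              Measurable[mc] _))) hc₁
      have hmulf : ∀ (u : Ω → ℝ), ∀ x,
          (a.indicator u x) * (b.indicator (fun _ => (1:ℝ)) x) = (a ∩ b).indicator u x := by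
        intro u x
        rw [← Set.inter_indicator_mul]
        simp [Set.indicator_apply]
      calc ∫ x in a ∩ b, (μ[f|mc]) x ∂μ
          = ∫ x, (a ∩ b).indicator (μ[f|mc]) x ∂μ :=
            (integral_indicator (haa.inter hbb)).symm
        _ = ∫ x, (a.indicator (μ[f|mc]) x) * (b.indicator (fun _ => (1:ℝ)) x) ∂μ := by
            simp_rw [hmulf]
        _ = (∫ x, a.indicator (μ[f|mc]) x ∂μ) * ∫ x, b.indicator (fun _ => (1:ℝ)) x ∂μ :=
            hindg.integral_fun_mul_eq_mul_integral
                (integrable_condExp.indicator haa).aestronglyMeasurable hGint.aestronglyMeasurable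
        _ = (∫ x, a.indicator f x ∂μ) * ∫ x, b.indicator (fun _ => (1:ℝ)) x ∂μ := by
            rw [integral_indicator haa, integral_indicator haa,
              setIntegral_condExp hmc hfi ha]
        _ = ∫ x, (a.indicator f x) * (b.indicator (fun _ => (1:ℝ)) x) ∂μ :=
            (hindf.integral_fun_mul_eq_mul_integral (hfi.indicator haa).aestronglyMeasurable
                hGint.aestronglyMeasurable).symm
        _ = ∫ x, (a ∩ b).indicator f x ∂μ := by simp_rw [hmulf]
        _ = ∫ x in a ∩ b, f x ∂μ := integral_indicator (haa.inter hbb)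
    · intro t htm ht
      rw [setIntegral_compl (hm₂ t htm) integrable_condExp,
        setIntegral_compl (hm₂ t htm) hfi, ht, integral_condExp hmc]
    · intro g hdisj hgm hC
      rw [integral_iUnion (fun i => hm₂ _ (hgm i)) hdisj integrable_condExp.integrableOn,
        integral_iUnion (fun i => hm₂ _ (hgm i)) hdisj hfi.integrableOn]
      exact tsum_congr hC
  exact (ae_eq_condExp_of_forall_setIntegral_eq hm₂ hfi
    (fun s _ _ => integrable_condExp.integrableOn)
    (fun s hs _ => key s hs)
    ((stronglyMeasurable_condExp (m := mc)).aestronglyMeasurable.mono le_sup_left)).symm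

variable [MeasurableSpace Ω] {μ : Measure Ω} [IsProbabilityMeasure μ]
  {ξ η : ℕ → Ω → ℝ} {ζ : ℕ → ℕ → Ω → ℝ} {φ : ℝ → ℝ → ℝ → ℝ} {Y : ℕ → ℕ → Ω → ℝ}

/-- The index type for the latent variables. -/
abbrev LatIdx : Type := ℕ ⊕ (ℕ ⊕ ℕ × ℕ)

/-- The combined family of latent variables. -/
def XF (ξ η : ℕ → Ω → ℝ) (ζ : ℕ → ℕ → Ω → ℝ) : LatIdx → Ω → ℝ :=
  Sum.elim ξ (Sum.elim η fun ij : ℕ × ℕ => ζ ij.1 ij.2)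

/-- The set of latent indices generating `latentAlg ξ η ζ I J`. -/
def idxSet (I J : Finset ℕ) : Set LatIdx :=
  {s | match s with
    | .inl i => i ∈ I
    | .inr (.inl j) => j ∈ J
    | .inr (.inr (i, j)) => i ∈ I ∧ j ∈ J}

/-- The extra latent indices of `(I', J')` not belonging to `(I, J)`. -/
def idxSetH (I J I' J' : Finset ℕ) : Set LatIdx :=
  {s | match s with
    | .inl i => i ∈ I' ∧ i ∉ I
    | .inr (.inl j) => j ∈ J' ∧ j ∉ J
    | .inr (.inr (i, j)) => (i ∈ I' ∧ j ∈ J') ∧ ¬(i ∈ I ∧ j ∈ J)}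

lemma latentAlg_eq (I J : Finset ℕ) :
    latentAlg ξ η ζ I J
      = ⨆ s ∈ idxSet I J, MeasurableSpace.comap (XF ξ η ζ s) inferInstance := by
  apply le_antisymm
  · refine sup_le (sup_le ?_ ?_) ?_
    · exact iSup₂_le fun i hi => le_iSup₂ (f := fun s (_ : s ∈ idxSet I J) =>
        MeasurableSpace.comap (XF ξ η ζ s) inferInstance) (Sum.inl i) hi
    · exact iSup₂_le fun j hj => le_iSup₂ (f := fun s (_ : s ∈ idxSet I J) =>
        MeasurableSpace.comap (XF ξ η ζ s) inferInstance) (Sum.inr (Sum.inl j)) hj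
    · exact iSup₂_le fun i hi => iSup₂_le fun j hj =>
        le_iSup₂ (f := fun s (_ : s ∈ idxSet I J) =>
          MeasurableSpace.comap (XF ξ η ζ s) inferInstance) (Sum.inr (Sum.inr (i, j))) ⟨hi, hj⟩
  · refine iSup₂_le fun s hs => ?_
    obtain (i | j | ⟨i, j⟩) := s
    · exact le_trans (le_iSup₂ (f := fun i (_ : i ∈ I) =>
        MeasurableSpace.comap (ξ i) inferInstance) i hs) (le_trans le_sup_left le_sup_left)
    · exact le_trans (le_iSup₂ (f := fun j (_ : j ∈ J) =>
        MeasurableSpace.comap (η j) inferInstance) j hs) (le_trans le_sup_right le_sup_left)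
    · refine le_trans ?_ le_sup_right
      exact le_trans (le_iSup₂ (f := fun j (_ : j ∈ J) =>
          MeasurableSpace.comap (ζ i j) inferInstance) j hs.2)
        (le_iSup₂ (f := fun i (_ : i ∈ I) =>
          ⨆ j ∈ J, MeasurableSpace.comap (ζ i j) inferInstance) i hs.1)

lemma comap_XF_le (hmodel : Model μ ξ η ζ φ Y) (s : LatIdx) :
    MeasurableSpace.comap (XF ξ η ζ s) inferInstance ≤ ‹MeasurableSpace Ω› := by
  obtain (i | j | ⟨i, j⟩) := s
  · exact (hmodel.meas_ξ i).comap_le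
  · exact (hmodel.meas_η j).comap_le
  · exact (hmodel.meas_ζ i j).comap_le

lemma latentAlg_le (hmodel : Model μ ξ η ζ φ Y) (I J : Finset ℕ) :
    latentAlg ξ η ζ I J ≤ ‹MeasurableSpace Ω› := by
  rw [latentAlg_eq]
  exact iSup₂_le fun s _ => comap_XF_le hmodel s

lemma latentAlg_mono {I J I' J' : Finset ℕ} (hI : I ⊆ I') (hJ : J ⊆ J') :
    latentAlg ξ η ζ I J ≤ latentAlg ξ η ζ I' J' := by
  rw [latentAlg_eq, latentAlg_eq]
  refine iSup₂_le fun s hs => le_iSup₂ (f := fun s (_ : s ∈ idxSet I' J') =>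
    MeasurableSpace.comap (XF ξ η ζ s) inferInstance) s ?_
  obtain (i | j | ⟨i, j⟩) := s
  · exact hI hs
  · exact hJ hs
  · exact ⟨hI hs.1, hJ hs.2⟩

lemma idxSet_union (I J I' J' : Finset ℕ) :
    idxSet (I ∩ I') (J ∩ J') ∪ idxSetH I J I' J' = idxSet I' J' := by
  ext s
  obtain (i | j | ⟨i, j⟩) := s <;>
    simp only [idxSet, idxSetH, Set.mem_union, Set.mem_setOf_eq, Finset.mem_inter] <;> tauto

lemma idxSetH_disjoint (I J I' J' : Finset ℕ) :
    Disjoint (idxSetH I J I' J') (idxSet I J) := by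
  rw [Set.disjoint_left]
  intro s hs hs'
  obtain (i | j | ⟨i, j⟩) := s <;>
    simp only [idxSet, idxSetH, Set.mem_setOf_eq] at hs hs' <;> tauto

/-- The σ-algebra generated by the extra latent variables. -/
def algH [MeasurableSpace Ω] (ξ η : ℕ → Ω → ℝ) (ζ : ℕ → ℕ → Ω → ℝ)
    (I J I' J' : Finset ℕ) : MeasurableSpace Ω :=
  ⨆ s ∈ idxSetH I J I' J', MeasurableSpace.comap (XF ξ η ζ s) inferInstance

/-- Key lemma: conditioning `ψ I J` on `A_{I',J'}` gives `ψ (I ∩ I') (J ∩ J')`. -/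
lemma condexp_psi {p q : ℕ} {h : (Fin p → Fin q → ℝ) → ℝ}
    {ψ : Finset ℕ → Finset ℕ → Ω → ℝ} (hmodel : Model μ ξ η ζ φ Y)
    (hψ : IsCondExpFamily μ ξ η ζ h Y ψ)
    (I J I' J' : Finset ℕ) (hI : I.card ≤ p) (hJ : J.card ≤ q) :
    μ[ψ I J | latentAlg ξ η ζ I' J'] =ᵐ[μ] ψ (I ∩ I') (J ∩ J') := by
  obtain ⟨If, hIf, hIfc⟩ := Infinite.exists_superset_card_eq I p hI
  obtain ⟨Jf, hJf, hJfc⟩ := Infinite.exists_superset_card_eq J q hJ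
  set Z := ker h Y If Jf with hZ
  have h1 : ψ I J =ᵐ[μ] μ[Z | latentAlg ξ η ζ I J] := hψ I J If Jf hIfc hJfc hIf hJf
  have h2 : ψ (I ∩ I') (J ∩ J') =ᵐ[μ] μ[Z | latentAlg ξ η ζ (I ∩ I') (J ∩ J')] :=
    hψ (I ∩ I') (J ∩ J') If Jf hIfc hJfc
      ((Finset.inter_subset_left).trans hIf) ((Finset.inter_subset_left).trans hJf)
  have hmHle : algH ξ η ζ I J I' J' ≤ ‹MeasurableSpace Ω› :=
    iSup₂_le fun s _ => comap_XF_le hmodel s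
  have hsupEq : latentAlg ξ η ζ I' J'
      = latentAlg ξ η ζ (I ∩ I') (J ∩ J') ⊔ algH ξ η ζ I J I' J' := by
    rw [latentAlg_eq (I := I ∩ I'), algH, ← iSup_union, idxSet_union, latentAlg_eq]
  have hindep : Indep (algH ξ η ζ I J I' J') (latentAlg ξ η ζ I J) μ := by
    rw [latentAlg_eq, algH]
    exact indep_iSup_of_disjoint (comap_XF_le hmodel) hmodel.indep.iIndep
      (idxSetH_disjoint I J I' J')
  have hmono : latentAlg ξ η ζ (I ∩ I') (J ∩ J') ≤ latentAlg ξ η ζ I J :=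
    latentAlg_mono Finset.inter_subset_left Finset.inter_subset_left
  calc μ[ψ I J | latentAlg ξ η ζ I' J']
      =ᵐ[μ] μ[μ[Z | latentAlg ξ η ζ I J] | latentAlg ξ η ζ I' J'] := condExp_congr_ae h1
    _ =ᵐ[μ] μ[μ[Z | latentAlg ξ η ζ I J] | latentAlg ξ η ζ (I ∩ I') (J ∩ J')] := by
        rw [hsupEq]
        exact condexp_sup_indep' (latentAlg_le hmodel I J) hmHle hmono
          stronglyMeasurable_condExp integrable_condExp hindep
    _ =ᵐ[μ] μ[Z | latentAlg ξ η ζ (I ∩ I') (J ∩ J')] :=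
        condExp_condExp_of_le hmono (latentAlg_le hmodel I J)
    _ =ᵐ[μ] ψ (I ∩ I') (J ∩ J') := h2.symm

lemma proj_eq' (ψ : Finset ℕ → Finset ℕ → Ω → ℝ) (I J : Finset ℕ) :
    proj ψ I J = ψ I J -
      ∑ P ∈ (I.powerset ×ˢ J.powerset).erase (I, J), proj ψ P.1 P.2 := by
  rw [proj]
  congr 1
  exact Finset.sum_attach ((I.powerset ×ˢ J.powerset).erase (I, J))
    (fun P => proj ψ P.1 P.2)

lemma sum_proj (ψ : Finset ℕ → Finset ℕ → Ω → ℝ) (S T : Finset ℕ) :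
    ∑ P ∈ S.powerset ×ˢ T.powerset, proj ψ P.1 P.2 = ψ S T := by
  have hmem : ((S, T) : Finset ℕ × Finset ℕ) ∈ S.powerset ×ˢ T.powerset := by
    simp [Finset.mem_product]
  rw [← Finset.add_sum_erase _ _ hmem, proj_eq']
  abel

lemma aestronglyMeasurable'_sum {ι : Type*} {m : MeasurableSpace Ω} {s : Finset ι}
    {f : ι → Ω → ℝ} (h : ∀ i ∈ s, AEStronglyMeasurable[m] (f i) μ) :
    AEStronglyMeasurable[m] (∑ i ∈ s, f i) μ := by
  classical
  induction s using Finset.induction_on with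
  | empty =>
      rw [Finset.sum_empty]
      exact (stronglyMeasurable_const (b := (0:ℝ))).aestronglyMeasurable
        (m := m) (μ := μ)
  | insert _ _ hnotmem ih =>
      rw [Finset.sum_insert hnotmem]
      exact (h _ (Finset.mem_insert_self _ _)).add
        (ih fun i hi => h i (Finset.mem_insert_of_mem hi))

lemma ae_sum_congr {ι : Type*} {s : Finset ι} {f g : ι → Ω → ℝ}
    (h : ∀ i ∈ s, f i =ᵐ[μ] g i) : (∑ i ∈ s, f i) =ᵐ[μ] ∑ i ∈ s, g i := by
  classical
  induction s using Finset.induction_on with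
  | empty => simp
  | insert _ _ hnotmem ih =>
      rw [Finset.sum_insert hnotmem, Finset.sum_insert hnotmem]
      exact (h _ (Finset.mem_insert_self _ _)).add
        (ih fun i hi => h i (Finset.mem_insert_of_mem hi))

lemma mem_erase_card_lt {I J : Finset ℕ} {P : Finset ℕ × Finset ℕ}
    (hP : P ∈ (I.powerset ×ˢ J.powerset).erase (I, J)) :
    P.1 ⊆ I ∧ P.2 ⊆ J ∧ P.1.card + P.2.card < I.card + J.card := by
  obtain ⟨hne, hmem⟩ := Finset.mem_erase.mp hP
  rw [Finset.mem_product, Finset.mem_powerset, Finset.mem_powerset] at hmem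
  refine ⟨hmem.1, hmem.2, ?_⟩
  have h1 := Finset.card_le_card hmem.1
  have h2 := Finset.card_le_card hmem.2
  rcases eq_or_ne P.1.card I.card with hc | hc
  · have : P.1 = I := Finset.eq_of_subset_of_card_le hmem.1 (le_of_eq hc.symm)
    have h2' : P.2 ≠ J := fun hh => hne (Prod.ext this hh)
    have := Finset.card_lt_card (HasSubset.Subset.ssubset_of_ne hmem.2 h2')
    omega
  · omega

/-- Integrability and a.e. measurability of the projections. -/
lemma proj_spec {p q : ℕ} {h : (Fin p → Fin q → ℝ) → ℝ}
    {ψ : Finset ℕ → Finset ℕ → Ω → ℝ} (hmodel : Model μ ξ η ζ φ Y)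
    (hψ : IsCondExpFamily μ ξ η ζ h Y ψ) :
    ∀ (n : ℕ) (I J : Finset ℕ), I.card + J.card ≤ n → I.card ≤ p → J.card ≤ q →
      Integrable (proj ψ I J) μ ∧
        AEStronglyMeasurable[(latentAlg ξ η ζ I J)] (proj ψ I J) μ := by
  intro n
  induction n using Nat.strong_induction_on with
  | _ n IH =>
  intro I J hn hIp hJq
  have hψIJ : ψ I J =ᵐ[μ] μ[ker h Y (Infinite.exists_superset_card_eq I p hIp).choose
      (Infinite.exists_superset_card_eq J q hJq).choose | latentAlg ξ η ζ I J] := by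
    obtain ⟨hsub, hcard⟩ := (Infinite.exists_superset_card_eq I p hIp).choose_spec
    obtain ⟨hsub', hcard'⟩ := (Infinite.exists_superset_card_eq J q hJq).choose_spec
    exact hψ I J _ _ hcard hcard' hsub hsub'
  have hψint : Integrable (ψ I J) μ := integrable_condExp.congr hψIJ.symm
  have hψmeas : AEStronglyMeasurable[(latentAlg ξ η ζ I J)] (ψ I J) μ :=
    ((stronglyMeasurable_condExp).aestronglyMeasurable).congr hψIJ.symm
  have hterm : ∀ P ∈ (I.powerset ×ˢ J.powerset).erase (I, J),
      Integrable (proj ψ P.1 P.2) μ ∧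
        AEStronglyMeasurable[(latentAlg ξ η ζ P.1 P.2)] (proj ψ P.1 P.2) μ := by
    intro P hP
    obtain ⟨hPI, hPJ, hlt⟩ := mem_erase_card_lt hP
    exact IH (P.1.card + P.2.card) (lt_of_lt_of_le hlt hn) P.1 P.2 le_rfl
      (le_trans (Finset.card_le_card hPI) hIp) (le_trans (Finset.card_le_card hPJ) hJq)
  rw [proj_eq']
  constructor
  · exact hψint.sub (integrable_finset_sum' _ fun P hP => (hterm P hP).1)
  · refine hψmeas.sub (aestronglyMeasurable'_sum fun P hP => ?_)
    obtain ⟨hPI, hPJ, _⟩ := mem_erase_card_lt hP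
    exact ((hterm P hP).2).mono (latentAlg_mono hPI hPJ)

/-- Degeneracy of the projections: conditioning on any `A_{I',J'}` with
`¬(I ⊆ I' ∧ J ⊆ J')` kills `proj ψ I J`. -/
lemma proj_degen {p q : ℕ} {h : (Fin p → Fin q → ℝ) → ℝ}
    {ψ : Finset ℕ → Finset ℕ → Ω → ℝ} (hmodel : Model μ ξ η ζ φ Y)
    (hψ : IsCondExpFamily μ ξ η ζ h Y ψ) :
    ∀ (n : ℕ) (I J I' J' : Finset ℕ), I.card + J.card ≤ n → I.card ≤ p → J.card ≤ q →
      ¬(I ⊆ I' ∧ J ⊆ J') →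
      μ[proj ψ I J | latentAlg ξ η ζ I' J'] =ᵐ[μ] 0 := by
  intro n
  induction n using Nat.strong_induction_on with
  | _ n IH =>
  intro I J I' J' hn hIp hJq hnsub
  set E := (I.powerset ×ˢ J.powerset).erase (I, J) with hE
  set E₁ := (I ∩ I').powerset ×ˢ (J ∩ J').powerset with hE₁
  have hE₁E : E₁ ⊆ E := by
    intro P hP
    rw [hE₁, Finset.mem_product, Finset.mem_powerset, Finset.mem_powerset] at hP
    rw [hE, Finset.mem_erase, Finset.mem_product, Finset.mem_powerset, Finset.mem_powerset]
    refine ⟨?_, hP.1.trans Finset.inter_subset_left, hP.2.trans Finset.inter_subset_left⟩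
    rintro rfl
    exact hnsub ⟨(hP.1.trans Finset.inter_subset_right : I ⊆ I'),
      (hP.2.trans Finset.inter_subset_right : J ⊆ J')⟩
  have hterm : ∀ P ∈ E, Integrable (proj ψ P.1 P.2) μ ∧
      AEStronglyMeasurable[(latentAlg ξ η ζ P.1 P.2)] (proj ψ P.1 P.2) μ := by
    intro P hP
    obtain ⟨hPI, hPJ, hlt⟩ := mem_erase_card_lt hP
    exact proj_spec hmodel hψ (P.1.card + P.2.card) P.1 P.2 le_rfl
      (le_trans (Finset.card_le_card hPI) hIp) (le_trans (Finset.card_le_card hPJ) hJq)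
  have key : ∀ P ∈ E, μ[proj ψ P.1 P.2 | latentAlg ξ η ζ I' J']
      =ᵐ[μ] (if P ∈ E₁ then proj ψ P.1 P.2 else 0) := by
    intro P hP
    obtain ⟨hPI, hPJ, hlt⟩ := mem_erase_card_lt hP
    by_cases hP1 : P ∈ E₁
    · rw [if_pos hP1]
      rw [hE₁, Finset.mem_product, Finset.mem_powerset, Finset.mem_powerset] at hP1
      refine condExp_of_aestronglyMeasurable' (latentAlg_le hmodel I' J')
        (((hterm P hP).2).mono (latentAlg_mono
          (hP1.1.trans Finset.inter_subset_right) (hP1.2.trans Finset.inter_subset_right)))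
        (hterm P hP).1
    · rw [if_neg hP1]
      rw [hE₁, Finset.mem_product, Finset.mem_powerset, Finset.mem_powerset] at hP1
      refine IH (P.1.card + P.2.card) (lt_of_lt_of_le hlt hn) P.1 P.2 I' J' le_rfl
        (le_trans (Finset.card_le_card hPI) hIp)
        (le_trans (Finset.card_le_card hPJ) hJq) ?_
      rintro ⟨h1, h2⟩
      exact hP1 ⟨Finset.subset_inter hPI h1, Finset.subset_inter hPJ h2⟩
  have hψc : μ[ψ I J | latentAlg ξ η ζ I' J'] =ᵐ[μ] ψ (I ∩ I') (J ∩ J') :=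
    condexp_psi hmodel hψ I J I' J' hIp hJq
  have hsum_eq : (∑ P ∈ E, (if P ∈ E₁ then proj ψ P.1 P.2 else 0)) = ψ (I ∩ I') (J ∩ J') := by
    rw [Finset.sum_ite_mem, Finset.inter_eq_right.mpr hE₁E]
    exact sum_proj ψ (I ∩ I') (J ∩ J')
  calc μ[proj ψ I J | latentAlg ξ η ζ I' J']
      =ᵐ[μ] μ[ψ I J - ∑ P ∈ E, proj ψ P.1 P.2 | latentAlg ξ η ζ I' J'] := by
        rw [proj_eq']
    _ =ᵐ[μ] μ[ψ I J | latentAlg ξ η ζ I' J']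
          - μ[∑ P ∈ E, proj ψ P.1 P.2 | latentAlg ξ η ζ I' J'] := by
        refine condExp_sub ?_ (integrable_finset_sum' _ fun P hP => (hterm P hP).1) _
        · obtain ⟨If, hIf, hIfc⟩ := Infinite.exists_superset_card_eq I p hIp
          obtain ⟨Jf, hJf, hJfc⟩ := Infinite.exists_superset_card_eq J q hJq
          exact integrable_condExp.congr (hψ I J If Jf hIfc hJfc hIf hJf).symm
    _ =ᵐ[μ] ψ (I ∩ I') (J ∩ J')
          - ∑ P ∈ E, μ[proj ψ P.1 P.2 | latentAlg ξ η ζ I' J'] :=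
        hψc.sub (condExp_finsetSum (fun P hP => (hterm P hP).1) _)
    _ =ᵐ[μ] ψ (I ∩ I') (J ∩ J') - ∑ P ∈ E, (if P ∈ E₁ then proj ψ P.1 P.2 else 0) :=
        (EventuallyEq.refl _ _).sub (ae_sum_congr key)
    _ =ᵐ[μ] 0 := by rw [hsum_eq, sub_self]

end Aux

/-- orthogonality of projections at the same level: if
`(I₁,J₁) ≠ (I₂,J₂)` with `|I₁| = |I₂| = r`, `|J₁| = |J₂| = c`, then
`Cov(p^{r,c}h₁(Y_{I₁,J₁}), p^{r,c}h₂(Y_{I₂,J₂})) = 0`. -/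
theorem stmt_2
    [MeasurableSpace Ω] (μ : Measure Ω) [IsProbabilityMeasure μ]
    (ξ η : ℕ → Ω → ℝ) (ζ : ℕ → ℕ → Ω → ℝ) (φ : ℝ → ℝ → ℝ → ℝ) (Y : ℕ → ℕ → Ω → ℝ)
    (hmodel : Model μ ξ η ζ φ Y)
    (p₁ q₁ p₂ q₂ : ℕ)
    (h₁ : (Fin p₁ → Fin q₁ → ℝ) → ℝ) (h₂ : (Fin p₂ → Fin q₂ → ℝ) → ℝ)
    (hsym₁ : SymKernel p₁ q₁ h₁) (hsym₂ : SymKernel p₂ q₂ h₂)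
    (hsq₁ : Integrable (fun ω => (ker h₁ Y (Finset.range p₁) (Finset.range q₁) ω) ^ 2) μ)
    (hsq₂ : Integrable (fun ω => (ker h₂ Y (Finset.range p₂) (Finset.range q₂) ω) ^ 2) μ)
    (ψ₁ ψ₂ : Finset ℕ → Finset ℕ → Ω → ℝ)
    (hψ₁ : IsCondExpFamily μ ξ η ζ h₁ Y ψ₁) (hψ₂ : IsCondExpFamily μ ξ η ζ h₂ Y ψ₂)
    (r c : ℕ) (hle₁ : (r, c) ≤ (p₁, q₁)) (hle₂ : (r, c) ≤ (p₂, q₂))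
    (I₁ J₁ I₂ J₂ : Finset ℕ) (hI₁ : I₁.card = r) (hJ₁ : J₁.card = c)
    (hI₂ : I₂.card = r) (hJ₂ : J₂.card = c)
    (hne : (I₁, J₁) ≠ (I₂, J₂)) :
    covar μ (proj ψ₁ I₁ J₁) (proj ψ₂ I₂ J₂) = 0 := by
  classical
  obtain ⟨hr₁, hc₁⟩ : r ≤ p₁ ∧ c ≤ q₁ := Prod.mk_le_mk.mp hle₁
  obtain ⟨hr₂, hc₂⟩ : r ≤ p₂ ∧ c ≤ q₂ := Prod.mk_le_mk.mp hle₂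
  set X₁ := proj ψ₁ I₁ J₁ with hX₁
  set X₂ := proj ψ₂ I₂ J₂ with hX₂
  have hspec₁ := proj_spec hmodel hψ₁ (I₁.card + J₁.card) I₁ J₁ le_rfl
    (hI₁ ▸ hr₁) (hJ₁ ▸ hc₁)
  have hspec₂ := proj_spec hmodel hψ₂ (I₂.card + J₂.card) I₂ J₂ le_rfl
    (hI₂ ▸ hr₂) (hJ₂ ▸ hc₂)
  -- the two pairs cannot both collapse to `(∅, ∅)`
  have hne_empty₁ : ¬(I₁ ⊆ (∅ : Finset ℕ) ∧ J₁ ⊆ (∅ : Finset ℕ)) := by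
    rintro ⟨h1, h2⟩
    have hI1e : I₁ = ∅ := Finset.subset_empty.mp h1
    have hJ1e : J₁ = ∅ := Finset.subset_empty.mp h2
    have hI2e : I₂ = ∅ := Finset.card_eq_zero.mp (by
      rw [hI₂, ← hI₁, hI1e, Finset.card_empty])
    have hJ2e : J₂ = ∅ := Finset.card_eq_zero.mp (by
      rw [hJ₂, ← hJ₁, hJ1e, Finset.card_empty])
    exact hne (by rw [hI1e, hJ1e, hI2e, hJ2e])
  have hne_empty₂ : ¬(I₂ ⊆ (∅ : Finset ℕ) ∧ J₂ ⊆ (∅ : Finset ℕ)) := by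
    rintro ⟨h1, h2⟩
    have hI2e : I₂ = ∅ := Finset.subset_empty.mp h1
    have hJ2e : J₂ = ∅ := Finset.subset_empty.mp h2
    have hI1e : I₁ = ∅ := Finset.card_eq_zero.mp (by
      rw [hI₁, ← hI₂, hI2e, Finset.card_empty])
    have hJ1e : J₁ = ∅ := Finset.card_eq_zero.mp (by
      rw [hJ₁, ← hJ₂, hJ2e, Finset.card_empty])
    exact hne (by rw [hI1e, hJ1e, hI2e, hJ2e])
  have hEX₁ : ∫ x, X₁ x ∂μ = 0 := by
    have hdeg := proj_degen hmodel hψ₁ (I₁.card + J₁.card) I₁ J₁ ∅ ∅ le_rfl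
      (hI₁ ▸ hr₁) (hJ₁ ▸ hc₁) hne_empty₁
    rw [← integral_condExp (latentAlg_le hmodel ∅ ∅) (f := X₁)]
    rw [integral_congr_ae hdeg]
    simp
  have hEX₂ : ∫ x, X₂ x ∂μ = 0 := by
    have hdeg := proj_degen hmodel hψ₂ (I₂.card + J₂.card) I₂ J₂ ∅ ∅ le_rfl
      (hI₂ ▸ hr₂) (hJ₂ ▸ hc₂) hne_empty₂
    rw [← integral_condExp (latentAlg_le hmodel ∅ ∅) (f := X₂)]
    rw [integral_congr_ae hdeg]
    simp
  have hdeg₂ : μ[X₁ | latentAlg ξ η ζ I₂ J₂] =ᵐ[μ] 0 := by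
    refine proj_degen hmodel hψ₁ (I₁.card + J₁.card) I₁ J₁ I₂ J₂ le_rfl
      (hI₁ ▸ hr₁) (hJ₁ ▸ hc₁) ?_
    rintro ⟨h1, h2⟩
    have e1 : I₁ = I₂ := Finset.eq_of_subset_of_card_le h1 (by rw [hI₂, hI₁])
    have e2 : J₁ = J₂ := Finset.eq_of_subset_of_card_le h2 (by rw [hJ₂, hJ₁])
    exact hne (by rw [e1, e2])
  have hprod : ∫ ω, X₁ ω * X₂ ω ∂μ = 0 := by
    by_cases hint : Integrable (X₂ * X₁) μ
    · have hpull : μ[X₂ * X₁ | latentAlg ξ η ζ I₂ J₂]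
          =ᵐ[μ] X₂ * μ[X₁ | latentAlg ξ η ζ I₂ J₂] :=
        condExp_mul_of_aestronglyMeasurable_left hspec₂.2 hint hspec₁.1
      have hz : X₂ * μ[X₁ | latentAlg ξ η ζ I₂ J₂] =ᵐ[μ] 0 := by
        filter_upwards [hdeg₂] with ω hω
        simp [hω]
      calc ∫ ω, X₁ ω * X₂ ω ∂μ = ∫ ω, (X₂ * X₁) ω ∂μ := by
            simp_rw [Pi.mul_apply, mul_comm]
        _ = ∫ ω, (μ[X₂ * X₁ | latentAlg ξ η ζ I₂ J₂]) ω ∂μ :=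
            (integral_condExp (latentAlg_le hmodel I₂ J₂)).symm
        _ = ∫ ω, (0 : Ω → ℝ) ω ∂μ := integral_congr_ae (hpull.trans hz)
        _ = 0 := by simp
    · refine integral_undef ?_
      intro hcon
      exact hint ((integrable_congr (by
        filter_upwards with ω
        simp [Pi.mul_apply, mul_comm])).mp hcon)
  simp only [covar, hEX₁, hEX₂, sub_zero]
  exact hprod

end RCEU
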